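/- arXiv:1908.06591 — 2 statements merged into one kernel-verified Lean document; each statement's English description precedes it below -/
import Mathlib

section
/- There exists a constant C > 0 such that for every integer n ≥ 1, if X_n has the Gamma distribution of shape √n + 1/2 and rate 1, then Var[log X_n] ≤ C n^{−1/2}. In particular, for u_n = −log X_n + (1/2) log n one has Var[u_n] ≤ C n^{−1/2}. -/
/-!
For `t > 0`, `log² t ≤ t + t⁻¹ - 2`: with `y = log t` this is `y² ≤ 2 (cosh y - 1)`, i.e.
`y / 2 ≤ sinh (y / 2)`. If `X ~ Gamma(ν, r)` and `c = E X = ν / r`, applying it to `t = X / c`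
gives `Var[log X] ≤ E[(log X - log c)²] ≤ E X / c + c E[X⁻¹] - 2 = (ν - 1)⁻¹`, using the
moments `E X = ν / r` and `E[X⁻¹] = r / (ν - 1)`. For `ν = √n + 1/2` this is at most `2 / √n`,
and `u_n` is an affine function of `log X_n`, with the same variance.
-/

open MeasureTheory ProbabilityTheory Real Set

namespace Real

theorem sq_le_two_mul_cosh_sub_one (y : ℝ) : y ^ 2 ≤ 2 * (cosh y - 1) := by
  wlog hy : 0 ≤ y generalizing y
  · simpa using this (-y) (by linarith)
  have hsinh : y / 2 ≤ sinh (y / 2) := self_le_sinh_iff.mpr (by positivity)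
  have hcosh : cosh y = 1 + 2 * sinh (y / 2) ^ 2 := by
    have := cosh_two_mul (y / 2)
    rw [mul_div_cancel₀ y two_ne_zero, cosh_sq] at this
    linarith
  nlinarith [pow_le_pow_left₀ (by positivity) hsinh 2]

theorem sq_log_le_add_inv_sub_two {t : ℝ} (ht : 0 < t) : log t ^ 2 ≤ t + t⁻¹ - 2 := by
  have := sq_le_two_mul_cosh_sub_one (log t)
  rw [cosh_log ht] at this
  linarith

end Real

namespace ProbabilityTheory

variable {a r : ℝ}

lemma gammaPDFReal_of_neg {x : ℝ} (hx : x < 0) : gammaPDFReal a r x = 0 :=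
  if_neg (not_le.mpr hx)

lemma measurable_gammaPDF (a r : ℝ) : Measurable (gammaPDF a r) :=
  (measurable_gammaPDFReal a r).ennreal_ofReal

lemma ae_pos_gammaMeasure : ∀ᵐ x ∂gammaMeasure a r, 0 < x := by
  rw [gammaMeasure, ae_withDensity_iff (measurable_gammaPDF a r)]
  filter_upwards [Measure.ae_ne volume 0] with x hx0 hpdf
  refine hx0.symm.lt_of_le (not_lt.mp fun hx ↦ hpdf ?_)
  rw [gammaPDF, gammaPDFReal_of_neg hx, ENNReal.ofReal_zero]

lemma gammaPDFReal_mul_rpow {x : ℝ} (hx : 0 < x) (t : ℝ) :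
    gammaPDFReal a r x * x ^ t = r ^ a / Gamma a * (x ^ (a + t - 1) * exp (-(r * x))) := by
  rw [gammaPDFReal, if_pos hx.le, add_sub_right_comm, rpow_add hx]
  ring

section

variable (ha : 0 < a) (hr : 0 < r)
include ha hr

lemma toReal_gammaPDF (x : ℝ) : (gammaPDF a r x).toReal = gammaPDFReal a r x :=
  ENNReal.toReal_ofReal (gammaPDFReal_nonneg ha hr x)

lemma integral_gammaMeasure (g : ℝ → ℝ) :
    ∫ x, g x ∂gammaMeasure a r = ∫ x in Ioi 0, gammaPDFReal a r x * g x := by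
  rw [gammaMeasure, integral_withDensity_eq_integral_toReal_smul
    (measurable_gammaPDF a r) (ae_of_all _ fun _ ↦ ENNReal.ofReal_lt_top)]
  simp_rw [toReal_gammaPDF ha hr, smul_eq_mul]
  rw [← integral_Ici_eq_integral_Ioi, setIntegral_eq_integral_of_forall_compl_eq_zero
    fun x hx ↦ by rw [gammaPDFReal_of_neg (not_le.mp hx), zero_mul]]

lemma integrable_gammaMeasure_iff {g : ℝ → ℝ} :
    Integrable g (gammaMeasure a r) ↔
      IntegrableOn (fun x ↦ gammaPDFReal a r x * g x) (Ioi 0) := by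
  rw [gammaMeasure, integrable_withDensity_iff_integrable_smul'
    (measurable_gammaPDF a r) (ae_of_all _ fun _ ↦ ENNReal.ofReal_lt_top)]
  simp_rw [toReal_gammaPDF ha hr, smul_eq_mul]
  rw [← integrableOn_Ici_iff_integrableOn_Ioi, integrableOn_iff_integrable_of_support_subset
    (s := Ici 0) fun x hx ↦ not_lt.mp fun hneg ↦ hx (by rw [gammaPDFReal_of_neg hneg, zero_mul])]

section Moments

variable {t : ℝ} (hat : 0 < a + t)
include hat

lemma integral_rpow_gammaMeasure :
    ∫ x, x ^ t ∂gammaMeasure a r = Gamma (a + t) / (Gamma a * r ^ t) := by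
  rw [integral_gammaMeasure ha hr, setIntegral_congr_fun measurableSet_Ioi
    fun x hx ↦ gammaPDFReal_mul_rpow hx t, integral_const_mul,
    integral_rpow_mul_exp_neg_mul_Ioi hat hr, one_div, inv_rpow hr.le, rpow_add hr]
  have := Gamma_pos_of_pos ha
  field_simp

lemma integrable_rpow_gammaMeasure : Integrable (fun x ↦ x ^ t) (gammaMeasure a r) := by
  -- a non-integrable function has integral `0`, while this one integrates to `Γ(a + t) / r ^ (a + t)`
  have hΓ : IntegrableOn (fun x ↦ x ^ (a + t - 1) * exp (-(r * x))) (Ioi 0) :=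
    .of_integral_ne_zero (by rw [integral_rpow_mul_exp_neg_mul_Ioi hat hr]; positivity)
  rw [integrable_gammaMeasure_iff ha hr]
  exact IntegrableOn.congr_fun (hΓ.const_mul _) (fun x hx ↦ (gammaPDFReal_mul_rpow hx t).symm)
    measurableSet_Ioi

end Moments

lemma integral_id_gammaMeasure : ∫ x, x ∂gammaMeasure a r = a / r := by
  have h := integral_rpow_gammaMeasure ha hr (t := 1) (by linarith)
  simp only [rpow_one] at h
  rw [h, Gamma_add_one ha.ne']
  field_simp [(Gamma_pos_of_pos ha).ne']

lemma integrable_id_gammaMeasure : Integrable (fun x ↦ x) (gammaMeasure a r) := by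
  simpa only [rpow_one] using integrable_rpow_gammaMeasure ha hr (t := 1) (by linarith)

end

section

variable (ha : 1 < a) (hr : 0 < r)
include ha hr

lemma integral_inv_gammaMeasure : ∫ x, x⁻¹ ∂gammaMeasure a r = r / (a - 1) := by
  have h := integral_rpow_gammaMeasure (zero_lt_one.trans ha) hr (t := -1) (by linarith)
  simp only [rpow_neg_one] at h
  have hΓ : Gamma a = (a - 1) * Gamma (a - 1) := by
    rw [← Gamma_add_one (sub_pos.mpr ha).ne', sub_add_cancel]
  rw [h, ← sub_eq_add_neg, hΓ]
  field_simp [(Gamma_pos_of_pos (sub_pos.mpr ha)).ne']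

lemma integrable_inv_gammaMeasure : Integrable (fun x ↦ x⁻¹) (gammaMeasure a r) := by
  simpa only [rpow_neg_one] using
    integrable_rpow_gammaMeasure (zero_lt_one.trans ha) hr (t := -1) (by linarith)

end

theorem variance_log_gammaMeasure_le {a r : ℝ} (ha : 1 < a) (hr : 0 < r) :
    Var[log; gammaMeasure a r] ≤ (a - 1)⁻¹ := by
  have ha₀ : 0 < a := zero_lt_one.trans ha
  have := isProbabilityMeasure_gammaMeasure ha₀ hr
  set c := a / r with hc_def
  have hc : 0 < c := div_pos ha₀ hr
  have hbound : ∀ᵐ x ∂gammaMeasure a r, (log x - log c) ^ 2 ≤ c⁻¹ * x + c * x⁻¹ - 2 := by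
    filter_upwards [ae_pos_gammaMeasure] with x hx
    have := sq_log_le_add_inv_sub_two (div_pos hx hc)
    rwa [log_div hx.ne' hc.ne', inv_div, div_eq_inv_mul, div_eq_mul_inv] at this
  have hid := (integrable_id_gammaMeasure ha₀ hr).const_mul c⁻¹
  have hinv := (integrable_inv_gammaMeasure ha hr).const_mul c
  have hsum : Integrable (fun x ↦ c⁻¹ * x + c * x⁻¹) (gammaMeasure a r) := hid.add hinv
  calc Var[log; gammaMeasure a r] = Var[fun x ↦ log x - log c; gammaMeasure a r] :=
        (variance_sub_const measurable_log.aestronglyMeasurable _).symm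
    _ ≤ ∫ x, (log x - log c) ^ 2 ∂gammaMeasure a r := variance_le_expectation_sq (by fun_prop)
    _ ≤ ∫ x, c⁻¹ * x + c * x⁻¹ - 2 ∂gammaMeasure a r :=
        integral_mono_of_nonneg (ae_of_all _ fun _ ↦ sq_nonneg _)
          (hsum.sub (integrable_const 2)) hbound
    _ = (a - 1)⁻¹ := by
        rw [integral_sub hsum (integrable_const _), integral_add hid hinv, integral_const_mul,
          integral_const_mul, integral_id_gammaMeasure ha₀ hr,
          integral_inv_gammaMeasure ha hr, integral_const, probReal_univ, one_smul, hc_def]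
        field_simp [(sub_pos.mpr ha).ne']
        ring

end ProbabilityTheory

/-- There is `C > 0` such that for all `n ≥ 1`, the variance of `log X_n`
under `Gamma(√n + 1/2, 1)` is at most `C n^{-1/2}`; in particular, the variance of
`u_n = -log X_n + (1/2) log n` satisfies the same bound. -/
theorem stmt_5 :
    ∃ C : ℝ, 0 < C ∧ ∀ n : ℕ, 1 ≤ n →
      variance Real.log (gammaMeasure (Real.sqrt n + 1 / 2) 1)
          ≤ C * (n : ℝ) ^ (-(1 : ℝ) / 2) ∧
      variance (fun x : ℝ => -Real.log x + (1 / 2) * Real.log n)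
          (gammaMeasure (Real.sqrt n + 1 / 2) 1)
          ≤ C * (n : ℝ) ^ (-(1 : ℝ) / 2) := by
  refine ⟨2, two_pos, fun n hn ↦ ?_⟩
  have h_one_le_sqrt : 1 ≤ √(n : ℝ) := one_le_sqrt.mpr (by exact_mod_cast hn)
  have := isProbabilityMeasure_gammaMeasure (by positivity : 0 < √(n : ℝ) + 1 / 2) one_pos
  have hvar : Var[log; gammaMeasure (√n + 1 / 2) 1] ≤ 2 * (n : ℝ) ^ (-(1 : ℝ) / 2) := by
    refine (variance_log_gammaMeasure_le (by linarith) one_pos).trans ?_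
    rw [neg_div, rpow_neg n.cast_nonneg, ← sqrt_eq_rpow, ← div_eq_mul_inv]
    calc (√(n : ℝ) + 1 / 2 - 1)⁻¹ ≤ (√(n : ℝ) / 2)⁻¹ := inv_anti₀ (by positivity) (by linarith)
      _ = 2 / √(n : ℝ) := inv_div _ _
  refine ⟨hvar, ?_⟩
  rwa [variance_add_const (by fun_prop), variance_fun_neg]
end

section
/- Fix an integer n ≥ 1, let X_n have the Gamma distribution of shape √n + 1/2 and rate 1, and let m_n denote the law of u_n = −log X_n + (1/2) log n. Then for every continuously differentiable f : ℝ → ℝ such that f and f' have at most polynomial growth, ∫ (1 + 1/(2√n) − e^{−y}) f(y) m_n(dy) = n^{−1/2} ∫ f'(y) m_n(dy). (This is the integration-by-parts formula: the left integrand equals W̄(y) = W(y) − E[W], where W(y) = 1 − e^{−y}.) -/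
/-!
Pulling back along `x ↦ -log x + c`, the factor `ν - exp (c - y)` becomes `ν - x`, and the
identity becomes Stein's identity for the Gamma law, i.e. integration by parts of
`f (-log x + c)` against `d(x ^ ν * exp (-x)) = x ^ (ν - 1) * exp (-x) * (ν - x) dx` on
`(0, ∞)`. Polynomial growth in `y = -log x + c` is at most `x ^ a + x ^ (-a)` for every
`a > 0`; taking `a < ν` makes all integrals converge and the boundary terms vanish at `0`
and at `∞`. For the theorem, `ν = √n + 1/2` and `c = log √n`, so `ν - exp (c - y)` equals
`√n * (1 + 1/(2√n) - exp (-y))`.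
-/

open MeasureTheory ProbabilityTheory Real Set Filter Topology

lemma integrableOn_rpow_mul_exp_neg {s : ℝ} (hs : 0 < s) :
    IntegrableOn (fun x : ℝ => x ^ (s - 1) * exp (-x)) (Ioi 0) := by
  simpa only [mul_comm] using GammaIntegral_convergent hs

lemma exp_mul_abs_log_le (a : ℝ) {x : ℝ} (hx : 0 < x) :
    exp (a * |log x|) ≤ x ^ a + x ^ (-a) := by
  rw [rpow_def_of_pos hx, rpow_def_of_pos hx]
  rcases abs_cases (log x) with ⟨h, -⟩ | ⟨h, -⟩ <;> rw [h]
  · rw [mul_comm]; linarith [exp_pos (log x * -a)]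
  · rw [mul_neg, ← neg_mul, mul_comm]; linarith [exp_pos (log x * a)]

lemma exists_abs_le_mul_exp_mul_abs {f : ℝ → ℝ} {C : ℝ} {p : ℕ}
    (hf : ∀ y, |f y| ≤ C * (1 + |y|) ^ p) {a : ℝ} (ha : 0 < a) :
    ∃ K, ∀ y, |f y| ≤ K * exp (a * |y|) := by
  set δ := a / (p + 1) with hδ
  have hδ0 : 0 < δ := by positivity
  refine ⟨max C 0 * (1 + δ⁻¹) ^ p, fun y => ?_⟩
  have hy := abs_nonneg y
  have hlin : 1 + |y| ≤ (1 + δ⁻¹) * exp (δ * |y|) := calc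
    1 + |y| ≤ (1 + δ⁻¹) * (1 + δ * |y|) := by
      field_simp
      nlinarith [mul_nonneg hδ0.le hy]
    _ ≤ (1 + δ⁻¹) * exp (δ * |y|) := by
      gcongr
      linarith [add_one_le_exp (δ * |y|)]
  have hexp : exp (δ * |y|) ^ p ≤ exp (a * |y|) := by
    rw [← exp_nat_mul, exp_le_exp, ← mul_assoc]
    refine mul_le_mul_of_nonneg_right ?_ hy
    rw [hδ, mul_div_assoc', div_le_iff₀ (by positivity)]
    nlinarith
  calc |f y| ≤ C * (1 + |y|) ^ p := hf y
    _ ≤ max C 0 * (1 + |y|) ^ p := by gcongr; exact le_max_left _ _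
    _ ≤ max C 0 * ((1 + δ⁻¹) ^ p * exp (δ * |y|) ^ p) := by
      rw [← mul_pow]; gcongr
    _ ≤ max C 0 * (1 + δ⁻¹) ^ p * exp (a * |y|) := by
      rw [mul_assoc]; gcongr

section PowerWeight

variable {s t a K : ℝ} {g : ℝ → ℝ}

lemma abs_rpow_mul_exp_neg_mul_le {x : ℝ} (hx : 0 < x) (hg : |g x| ≤ K * (x ^ a + x ^ (-a))) :
    |x ^ t * exp (-x) * g x| ≤ K * (x ^ (t + a) * exp (-x) + x ^ (t - a) * exp (-x)) := by
  rw [abs_mul, abs_of_pos (by positivity : 0 < x ^ t * exp (-x)), rpow_add hx,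
    sub_eq_add_neg, rpow_add hx]
  calc x ^ t * exp (-x) * |g x| ≤ x ^ t * exp (-x) * (K * (x ^ a + x ^ (-a))) := by gcongr
    _ = _ := by ring

variable (hgK : ∀ x > 0, |g x| ≤ K * (x ^ a + x ^ (-a)))
include hgK

lemma tendsto_rpow_mul_exp_neg_mul_atTop :
    Tendsto (fun x => x ^ s * exp (-x) * g x) atTop (𝓝 0) := by
  have h (b : ℝ) : Tendsto (fun x : ℝ => x ^ b * exp (-x)) atTop (𝓝 0) := by
    simpa using tendsto_rpow_mul_exp_neg_mul_atTop_nhds_zero b 1 one_pos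
  refine squeeze_zero_norm' ?_ (by simpa using ((h (s + a)).add (h (s - a))).const_mul K)
  filter_upwards [eventually_gt_atTop 0] with x hx
  exact abs_rpow_mul_exp_neg_mul_le hx (hgK x hx)

variable (hs : |a| < s)
include hs

lemma integrableOn_rpow_mul_exp_neg_mul (hg : AEStronglyMeasurable g (volume.restrict (Ioi 0))) :
    IntegrableOn (fun x => x ^ (s - 1) * exp (-x) * g x) (Ioi 0) := by
  obtain ⟨hsa, hsa'⟩ := abs_lt.mp hs
  have hbound := ((integrableOn_rpow_mul_exp_neg (s := s + a) (by linarith)).add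
    (integrableOn_rpow_mul_exp_neg (s := s - a) (by linarith))).const_mul K
  refine hbound.mono' (((by fun_prop : Measurable fun x : ℝ => x ^ (s - 1) * exp (-x))
    ).aestronglyMeasurable.mul hg) ?_
  filter_upwards [self_mem_ae_restrict measurableSet_Ioi] with x hx
  exact (abs_rpow_mul_exp_neg_mul_le hx (hgK x hx)).trans_eq
    (by simp only [Pi.add_apply]; ring_nf)

lemma tendsto_rpow_mul_exp_neg_mul_nhdsGT_zero :
    Tendsto (fun x => x ^ s * exp (-x) * g x) (𝓝[>] 0) (𝓝 0) := by
  obtain ⟨hsa, hsa'⟩ := abs_lt.mp hs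
  have hcont : ContinuousAt
      (fun x : ℝ => K * (x ^ (s + a) * exp (-x) + x ^ (s - a) * exp (-x))) 0 := by
    fun_prop (disch := (right; linarith))
  have hzero := hcont.tendsto
  rw [zero_rpow (by linarith), zero_rpow (by linarith)] at hzero
  refine squeeze_zero_norm' ?_ (tendsto_nhdsWithin_of_tendsto_nhds (by simpa using hzero))
  filter_upwards [self_mem_nhdsWithin] with x hx
  exact abs_rpow_mul_exp_neg_mul_le hx (hgK x hx)

end PowerWeight

lemma integral_gammaMeasure_one {ν : ℝ} (hν : 0 < ν) (g : ℝ → ℝ) :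
    ∫ x, g x ∂gammaMeasure ν 1 = (Gamma ν)⁻¹ * ∫ x in Ioi 0, x ^ (ν - 1) * exp (-x) * g x := by
  rw [gammaMeasure, integral_withDensity_eq_integral_toReal_smul (f := gammaPDF ν 1)
      (measurable_gammaPDFReal ν 1).ennreal_ofReal (ae_of_all _ fun _ => ENNReal.ofReal_lt_top),
    ← setIntegral_eq_integral_of_forall_compl_eq_zero (s := Ici 0), integral_Ici_eq_integral_Ioi,
    ← integral_const_mul]
  · refine setIntegral_congr_fun measurableSet_Ioi fun x (hx : 0 < x) => ?_
    rw [gammaPDF, ENNReal.toReal_ofReal (gammaPDFReal_nonneg hν one_pos x), gammaPDFReal,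
      if_pos hx.le, one_rpow, one_mul, smul_eq_mul]
    ring
  · intro x hx
    rw [gammaPDF_of_neg (not_le.mp hx), ENNReal.toReal_zero, zero_smul]

section Stein

variable {ν a c K K' : ℝ} {f : ℝ → ℝ}

lemma abs_comp_neg_log_add_le (ha : 0 ≤ a) (hfK : ∀ y, |f y| ≤ K * exp (a * |y|)) {x : ℝ}
    (hx : 0 < x) : |f (-log x + c)| ≤ K * exp (a * |c|) * (x ^ a + x ^ (-a)) := by
  have hK : 0 ≤ K := by simpa using (abs_nonneg _).trans (hfK 0)
  have hshift : exp (a * |-log x + c|) ≤ exp (a * |c|) * exp (a * |log x|) := by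
    rw [← exp_add, exp_le_exp, ← mul_add, add_comm |c|, ← abs_neg (log x)]
    exact mul_le_mul_of_nonneg_left (abs_add_le _ _) ha
  calc |f (-log x + c)| ≤ K * exp (a * |-log x + c|) := hfK _
    _ ≤ K * (exp (a * |c|) * (x ^ a + x ^ (-a))) := by
      gcongr
      exact hshift.trans (by gcongr; exact exp_mul_abs_log_le a hx)
    _ = _ := by ring

theorem integral_Ioi_gamma_stein_comp_neg_log_add (ha₀ : 0 ≤ a) (ha : a < ν)
    (hf : ContDiff ℝ 1 f) (hfK : ∀ y, |f y| ≤ K * exp (a * |y|))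
    (hf'K : ∀ y, |deriv f y| ≤ K' * exp (a * |y|)) :
    ∫ x in Ioi 0, x ^ (ν - 1) * exp (-x) * ((ν - x) * f (-log x + c)) =
      ∫ x in Ioi 0, x ^ (ν - 1) * exp (-x) * deriv f (-log x + c) := by
  have haν : |a| < ν := by rwa [abs_of_nonneg ha₀]
  have haν' : |a| < ν + 1 := by linarith
  have hmeas (g : ℝ → ℝ) (hg : Continuous g) :
      AEStronglyMeasurable (fun x => g (-log x + c)) (volume.restrict (Ioi 0)) :=
    (hg.measurable.comp (measurable_log.neg.add_const c)).aestronglyMeasurable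
  have hfb := fun x (hx : x > 0) => abs_comp_neg_log_add_le (c := c) ha₀ hfK hx
  have hf'b := fun x (hx : x > 0) => abs_comp_neg_log_add_le (c := c) ha₀ hf'K hx
  have hu : ∀ x ∈ Ioi (0 : ℝ), HasDerivAt (fun x => f (-log x + c))
      (deriv f (-log x + c) * -x⁻¹) x := fun x (hx : 0 < x) =>
    (hf.differentiable one_ne_zero _).hasDerivAt.comp x
      ((hasDerivAt_log hx.ne').neg.add_const c)
  have hv : ∀ x ∈ Ioi (0 : ℝ), HasDerivAt (fun x => x ^ ν * exp (-x))
      (x ^ (ν - 1) * exp (-x) * (ν - x)) x := fun x (hx : 0 < x) => by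
    refine ((hasDerivAt_rpow_const (p := ν) (Or.inl hx.ne')).mul
      (hasDerivAt_neg x).exp).congr_deriv ?_
    rw [rpow_sub_one hx.ne']
    field_simp
    ring
  have huv' : IntegrableOn ((fun x => f (-log x + c)) * fun x => x ^ (ν - 1) * exp (-x) * (ν - x))
      (Ioi 0) := by
    refine IntegrableOn.congr_fun
      (((integrableOn_rpow_mul_exp_neg_mul hfb haν (hmeas f hf.continuous)).const_mul ν).sub
        (integrableOn_rpow_mul_exp_neg_mul hfb haν' (hmeas f hf.continuous)))
      (fun x (hx : 0 < x) => ?_) measurableSet_Ioi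
    simp only [Pi.mul_apply, Pi.sub_apply, add_sub_cancel_right, rpow_sub_one hx.ne']
    field_simp
  have hu'v : IntegrableOn ((fun x => deriv f (-log x + c) * -x⁻¹) * fun x => x ^ ν * exp (-x))
      (Ioi 0) := by
    refine (integrableOn_rpow_mul_exp_neg_mul hf'b haν
      (hmeas _ (hf.continuous_deriv le_rfl))).neg.congr_fun
      (fun x (hx : 0 < x) => ?_) measurableSet_Ioi
    simp only [Pi.mul_apply, Pi.neg_apply, rpow_sub_one hx.ne']
    field_simp
  have hlim₀ := tendsto_rpow_mul_exp_neg_mul_nhdsGT_zero hfb haν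
  have hlim := tendsto_rpow_mul_exp_neg_mul_atTop (s := ν) hfb
  have key := integral_Ioi_mul_deriv_eq_deriv_mul hu hv huv' hu'v
    (hlim₀.congr fun x => mul_comm _ _) (hlim.congr fun x => mul_comm _ _)
  rw [sub_zero, zero_sub, ← integral_neg] at key
  calc _ = ∫ x in Ioi 0, f (-log x + c) * (x ^ (ν - 1) * exp (-x) * (ν - x)) := by
        congr 1 with x; ring
    _ = _ := key.trans (setIntegral_congr_fun measurableSet_Ioi fun x (hx : 0 < x) => by
        rw [rpow_sub_one hx.ne']; field_simp)

end Stein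

theorem integral_map_neg_log_add_gammaMeasure_ibp {ν : ℝ} (hν : 0 < ν) (c : ℝ) {f : ℝ → ℝ}
    (hf : ContDiff ℝ 1 f) (hfgrowth : ∃ (C : ℝ) (p : ℕ), ∀ y, |f y| ≤ C * (1 + |y|) ^ p)
    (hf'growth : ∃ (C : ℝ) (p : ℕ), ∀ y, |deriv f y| ≤ C * (1 + |y|) ^ p) :
    ∫ y, (ν - exp (c - y)) * f y ∂(gammaMeasure ν 1).map (fun x => -log x + c) =
      ∫ y, deriv f y ∂(gammaMeasure ν 1).map (fun x => -log x + c) := by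
  obtain ⟨C, p, hC⟩ := hfgrowth
  obtain ⟨C', p', hC'⟩ := hf'growth
  obtain ⟨K, hK⟩ := exists_abs_le_mul_exp_mul_abs hC (half_pos hν)
  obtain ⟨K', hK'⟩ := exists_abs_le_mul_exp_mul_abs hC' (half_pos hν)
  have hmeas : AEMeasurable (fun x => -log x + c) (gammaMeasure ν 1) := by fun_prop
  have hcont : Continuous fun y => (ν - exp (c - y)) * f y := by
    have := hf.continuous
    fun_prop
  rw [integral_map hmeas hcont.aestronglyMeasurable,
    integral_map hmeas (hf.continuous_deriv le_rfl).aestronglyMeasurable,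
    integral_gammaMeasure_one hν, integral_gammaMeasure_one hν,
    ← integral_Ioi_gamma_stein_comp_neg_log_add (half_pos hν).le (half_lt_self hν) hf hK hK']
  congr 1
  refine setIntegral_congr_fun measurableSet_Ioi fun x (hx : 0 < x) => ?_
  rw [sub_add_cancel_right, neg_neg, exp_log hx]

/-- Integration-by-parts formula for the law `m_n` of
`u_n = -log X_n + (1/2) log n`, `X_n ~ Gamma(√n + 1/2, 1)`: for every continuously
differentiable `f` such that `f` and `f'` have at most polynomial growth,
`∫ (1 + 1/(2√n) - e^{-y}) f(y) m_n(dy) = n^{-1/2} ∫ f'(y) m_n(dy)`. -/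
theorem stmt_15 (n : ℕ) (hn : 1 ≤ n) (f : ℝ → ℝ) (hf : ContDiff ℝ 1 f)
    (hfgrowth : ∃ (Cf : ℝ) (p : ℕ), ∀ x : ℝ, |f x| ≤ Cf * (1 + |x|) ^ p)
    (hf'growth : ∃ (Cf : ℝ) (p : ℕ), ∀ x : ℝ, |deriv f x| ≤ Cf * (1 + |x|) ^ p) :
    ∫ y, (1 + 1 / (2 * Real.sqrt n) - Real.exp (-y)) * f y
        ∂(Measure.map (fun x => -Real.log x + (1 / 2) * Real.log n)
            (gammaMeasure (Real.sqrt n + 1 / 2) 1))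
      = (n : ℝ) ^ (-(1 : ℝ) / 2) *
        ∫ y, deriv f y
          ∂(Measure.map (fun x => -Real.log x + (1 / 2) * Real.log n)
              (gammaMeasure (Real.sqrt n + 1 / 2) 1)) := by
  have hn₀ : (0 : ℝ) < n := by exact_mod_cast hn
  have hsqrt : exp (1 / 2 * log n) = √n := by
    rw [sqrt_eq_rpow, rpow_def_of_pos hn₀, mul_comm]
  rw [show (n : ℝ) ^ (-(1 : ℝ) / 2) = (√n)⁻¹ by rw [neg_div, rpow_neg hn₀.le, sqrt_eq_rpow],
    ← integral_map_neg_log_add_gammaMeasure_ibp (by positivity) _ hf hfgrowth hf'growth,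
    ← integral_const_mul]
  congr 1 with y
  rw [sub_eq_add_neg _ y, exp_add, hsqrt]
  field_simp
end
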